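/- arXiv:1705.03597 — 3 statements merged into one kernel-verified Lean document; each statement's English description precedes it below -/
import Mathlib

section
/- Let G be a finite nonempty linearly ordered set, Π a finite nonempty index set, and for each π ∈ Π let μ_π : G → ℝ be a probability mass function (μ_π ≥ 0, ∑_{g ∈ G} μ_π(g) = 1), with CDF F_π(g) = ∑_{g' ≤ g} μ_π(g') and strict CDF F⁻_π(g) = ∑_{g' < g} μ_π(g'). Let τ ∈ (0,1] and let q* = q_τ(g ↦ min_{π ∈ Π} F_π(g)) be the τ-lower quantile of the pointwise minimum of the CDFs. Then every π ∈ Π that minimizes F⁻_π(q*) over Π satisfies q_τ(F_π) = q*. -/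
open Classical

/-- The τ-lower quantile of `F : G → ℝ` on a finite nonempty linear order `G`:
the least `g` with `τ ≤ F g` (junk value `max G` if no such `g` exists). -/
noncomputable def lowQ {G : Type*} [Fintype G] [LinearOrder G] [Nonempty G]
    (τ : ℝ) (F : G → ℝ) : G :=
  if h : (Finset.univ.filter fun g => τ ≤ F g).Nonempty
  then (Finset.univ.filter fun g => τ ≤ F g).min' h
  else Finset.univ.max' Finset.univ_nonempty

/-- The CDF of a mass function `μ` on a finite linear order: `F(g) = ∑_{g' ≤ g} μ g'`. -/
noncomputable def cdf {G : Type*} [Fintype G] [LinearOrder G] (μ : G → ℝ) (g : G) : ℝ :=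
  ∑ g' ∈ Finset.univ.filter (fun g' => g' ≤ g), μ g'

/-- The strict CDF of a mass function `μ`: `F⁻(g) = ∑_{g' < g} μ g'`. -/
noncomputable def scdf {G : Type*} [Fintype G] [LinearOrder G] (μ : G → ℝ) (g : G) : ℝ :=
  ∑ g' ∈ Finset.univ.filter (fun g' => g' < g), μ g'

/-!
Let `m` be the pointwise minimum of the CDFs, so that `q*` is the least point where `m` reaches
`τ`. Every `F_π` reaches `τ` at `q*`, since `F_π ≥ m`. If `q*` has a predecessor `p`, then
`F⁻_π(q*) = F_π(p)`; for the minimizer `π` this is at most `F_π'(p)` for every `π'`, and some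
`F_π'(p)` lies below `τ` because `m(p) < τ`. Hence `F_π < τ` strictly before `q*`, which makes `q*`
the `τ`-quantile of `F_π`. If `q*` is the least point, `F⁻_π(q*) = 0 < τ` does the same job.
-/

section Quantile

variable {G : Type*} [Fintype G] [LinearOrder G] [Nonempty G] {τ : ℝ} {F : G → ℝ} {q : G}

theorem lowQ_eq_iff (hF : ∃ g, τ ≤ F g) : lowQ τ F = q ↔ τ ≤ F q ∧ ∀ g < q, F g < τ := by
  have hS : (Finset.univ.filter fun g => τ ≤ F g).Nonempty := by
    obtain ⟨g, hg⟩ := hF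
    exact ⟨g, by simpa using hg⟩
  rw [lowQ, dif_pos hS]
  constructor
  · rintro rfl
    refine ⟨(Finset.mem_filter.1 (Finset.min'_mem _ hS)).2, fun g hg => ?_⟩
    by_contra! hτg
    exact (Finset.min'_le _ g (by simpa using hτg)).not_gt hg
  · rintro ⟨hq, hbelow⟩
    refine le_antisymm (Finset.min'_le _ q (by simpa using hq)) (Finset.le_min' _ hS q ?_)
    intro g hg
    by_contra! hgq
    exact (hbelow g hgq).not_ge (Finset.mem_filter.1 hg).2

end Quantile

section Cdf

variable {G : Type*} [Fintype G] [LinearOrder G] {μ : G → ℝ} {p q : G}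

theorem cdf_nonneg (hμ : ∀ g, 0 ≤ μ g) (g : G) : 0 ≤ cdf μ g :=
  Finset.sum_nonneg fun g' _ => hμ g'

theorem cdf_of_isTop (hq : IsTop q) : cdf μ q = ∑ g, μ g := by
  rw [cdf, Finset.filter_true_of_mem fun g _ => hq g]

theorem cdf_le_scdf_of_lt (hμ : ∀ g, 0 ≤ μ g) (hpq : p < q) : cdf μ p ≤ scdf μ q := by
  refine Finset.sum_le_sum_of_subset_of_nonneg ?_ fun g _ _ => hμ g
  intro g
  simpa using fun hgp => hgp.trans_lt hpq

theorem scdf_of_isMin (hq : IsMin q) : scdf μ q = 0 := by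
  refine Finset.sum_eq_zero fun g hg => ?_
  exact absurd (Finset.mem_filter.1 hg).2 hq.not_lt

theorem scdf_eq_cdf_of_covBy (hpq : p ⋖ q) : scdf μ q = cdf μ p := by
  rw [scdf, cdf]
  congr 1
  ext g
  simpa using ⟨hpq.le_of_lt, fun hgp => hgp.trans_lt hpq.lt⟩

end Cdf

theorem scdf_lt_of_forall_scdf_le {G P : Type*} [Fintype G] [LinearOrder G]
    {μ : P → G → ℝ} {τ : ℝ} {q : G} {π : P} (hτ : 0 < τ) (hπ : ∀ π', scdf (μ π) q ≤ scdf (μ π') q)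
    (hbelow : ∀ g < q, ∃ π', cdf (μ π') g < τ) : scdf (μ π) q < τ := by
  by_cases hq : IsMin q
  · rwa [scdf_of_isMin hq]
  obtain ⟨g, hgq⟩ := not_isMin_iff.1 hq
  obtain ⟨p, -, hpq⟩ := exists_le_covBy_of_lt hgq
  obtain ⟨π', hπ'⟩ := hbelow p hpq.lt
  calc scdf (μ π) q ≤ scdf (μ π') q := hπ π'
    _ = cdf (μ π') p := scdf_eq_cdf_of_covBy hpq
    _ < τ := hπ'

theorem quantile_of_strict_cdf_minimizer_general
    {G P : Type*} [Fintype G] [LinearOrder G] [Nonempty G]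
    (μ : P → G → ℝ)
    (hpos : ∀ π g, 0 ≤ μ π g) (hsum : ∀ π, ∑ g, μ π g = 1)
    (τ : ℝ) (hτ0 : 0 < τ) (hτ1 : τ ≤ 1)
    (qstar : G) (hqstar : qstar = lowQ τ (fun g => ⨅ π, cdf (μ π) g)) :
    ∀ π : P, (∀ π' : P, scdf (μ π) qstar ≤ scdf (μ π') qstar) →
      lowQ τ (cdf (μ π)) = qstar := by
  intro π hπ
  have : Nonempty P := ⟨π⟩
  have hbdd : ∀ g, BddBelow (Set.range fun π' => cdf (μ π') g) :=
    fun g => ⟨0, by rintro _ ⟨π', rfl⟩; exact cdf_nonneg (hpos π') g⟩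
  obtain ⟨top, htop⟩ : ∃ top : G, IsTop top := Finite.exists_max id
  have hreach : τ ≤ ⨅ π', cdf (μ π') top :=
    le_ciInf fun π' => by rwa [cdf_of_isTop htop, hsum]
  obtain ⟨hq, hbelow⟩ := (lowQ_eq_iff ⟨top, hreach⟩).1 hqstar.symm
  have hscdf : scdf (μ π) qstar < τ :=
    scdf_lt_of_forall_scdf_le hτ0 hπ fun g hg => exists_lt_of_ciInf_lt (hbelow g hg)
  have hqπ : τ ≤ cdf (μ π) qstar := hq.trans (ciInf_le (hbdd qstar) π)
  exact (lowQ_eq_iff ⟨qstar, hqπ⟩).2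
    ⟨hqπ, fun g hg => (cdf_le_scdf_of_lt (hpos π) hg).trans_lt hscdf⟩

/-- with `q*` the τ-lower quantile of the pointwise minimum of the CDFs,
every `π` minimizing the strict CDF at `q*` satisfies `q_τ(F_π) = q*`. -/
theorem quantile_of_strict_cdf_minimizer
    {G P : Type*} [Fintype G] [LinearOrder G] [Nonempty G]
    [Fintype P] [Nonempty P]
    (μ : P → G → ℝ)
    (hpos : ∀ π g, 0 ≤ μ π g) (hsum : ∀ π, ∑ g, μ π g = 1)
    (τ : ℝ) (hτ0 : 0 < τ) (hτ1 : τ ≤ 1)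
    (qstar : G) (hqstar : qstar = lowQ τ (fun g => ⨅ π, cdf (μ π) g)) :
    ∀ π : P, (∀ π' : P, scdf (μ π) qstar ≤ scdf (μ π') qstar) →
      lowQ τ (cdf (μ π)) = qstar :=
  quantile_of_strict_cdf_minimizer_general μ hpos hsum τ hτ0 hτ1 qstar hqstar
end

section
/- Let G be a finite nonempty linearly ordered set, Π₀ a finite nonempty set, and for each π ∈ Π₀ a probability mass function μ_π : G → ℝ with CDF F_π(g) = ∑_{g' ≤ g} μ_π(g') and strict CDF F⁻_π(g) = ∑_{g' < g} μ_π(g'). Let 0 < τ_1 < … < τ_L ≤ 1, and define recursively q*_i = max_{π ∈ Π_{i-1}} q_{τ_i}(F_π) and Π_i = {π ∈ Π_{i-1} : F⁻_π(q*_i) = min_{π' ∈ Π_{i-1}} F⁻_{π'}(q*_i)}. Then every π ∈ Π_i satisfies q_{τ_i}(F_π) = q*_i, and the optimal quantiles are monotone: q*_1 ≤ q*_2 ≤ … ≤ q*_L. -/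
open Classical

/-- The recursive construction: `qPi μ τ 0 = (junk, Π₀)` and, for `i ≥ 1`,
`qPi μ τ i = (q*_i, Π_i)` where `q*_i = max_{π ∈ Π_{i-1}} q_{τ_i}(F_π)` and
`Π_i` is the set of `π ∈ Π_{i-1}` minimizing the strict CDF `F⁻_π(q*_i)` over `Π_{i-1}`. -/
noncomputable def qPi {G P : Type*} [Fintype G] [LinearOrder G] [Nonempty G] [Fintype P]
    (μ : P → G → ℝ) (τ : ℕ → ℝ) : ℕ → G × Finset P
  | 0 => (Classical.arbitrary G, Finset.univ)
  | i + 1 =>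
    let prev := (qPi μ τ i).2
    let q := ((prev.image fun π => lowQ (τ (i + 1)) (cdf (μ π))).max).unbotD
      (Classical.arbitrary G)
    (q, prev.filter fun π => ∀ π' ∈ prev, scdf (μ π) q ≤ scdf (μ π') q)

/-! If `π` minimizes `F⁻_π(q*_i)` over `Π_{i-1}` and `π'` attains the maximum `q*_i`, then
`F⁻_π(q*_i) ≤ F⁻_{π'}(q*_i) < τ_i ≤ F_π(q_{τ_i}(F_π)) ≤ F_π(q*_i)`, which forces
`q_{τ_i}(F_π) = q*_i`. Monotonicity follows: for `π ∈ Π_{i+1} ⊆ Π_i`,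
`q*_i = q_{τ_i}(F_π) ≤ q_{τ_{i+1}}(F_π) ≤ q*_{i+1}`. -/

section LowerQuantile

variable {G : Type*} [Fintype G] [LinearOrder G] [Nonempty G] {τ τ' : ℝ} {F : G → ℝ} {g : G}

lemma lowQ_le (hg : τ ≤ F g) : lowQ τ F ≤ g := by
  have h : (Finset.univ.filter fun g => τ ≤ F g).Nonempty := ⟨g, by simpa using hg⟩
  rw [lowQ, dif_pos h]
  exact Finset.min'_le _ _ (by simpa using hg)

lemma le_apply_lowQ (h : ∃ g, τ ≤ F g) : τ ≤ F (lowQ τ F) := by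
  obtain ⟨g, hg⟩ := h
  have h : (Finset.univ.filter fun g => τ ≤ F g).Nonempty := ⟨g, by simpa using hg⟩
  rw [lowQ, dif_pos h]
  simpa using Finset.min'_mem _ h

lemma apply_lt_of_lt_lowQ (hg : g < lowQ τ F) : F g < τ :=
  lt_of_not_ge fun h => (lowQ_le h).not_gt hg

lemma lowQ_mono_left (hττ' : τ ≤ τ') (h : ∃ g, τ' ≤ F g) : lowQ τ F ≤ lowQ τ' F :=
  lowQ_le (hττ'.trans (le_apply_lowQ h))

end LowerQuantile

section CDF

variable {G : Type*} [Fintype G] [LinearOrder G] {μ : G → ℝ} {τ : ℝ}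

lemma cdf_mono (hμ : ∀ g, 0 ≤ μ g) : Monotone (cdf μ) := fun _ _ hab =>
  Finset.sum_le_sum_of_subset_of_nonneg
    (fun x hx => by simpa using (Finset.mem_filter.1 hx).2.trans hab) fun x _ _ => hμ x

lemma cdf_le_scdf_of_lt_s5 (hμ : ∀ g, 0 ≤ μ g) {a b : G} (hab : a < b) : cdf μ a ≤ scdf μ b :=
  Finset.sum_le_sum_of_subset_of_nonneg
    (fun x hx => by simpa using (Finset.mem_filter.1 hx).2.trans_lt hab) fun x _ _ => hμ x

lemma exists_le_cdf [Nonempty G] (hμ : ∑ g, μ g = 1) (hτ : τ ≤ 1) : ∃ g, τ ≤ cdf μ g := by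
  refine ⟨Finset.univ.max' Finset.univ_nonempty, ?_⟩
  have htop : cdf μ (Finset.univ.max' Finset.univ_nonempty) = 1 := by
    rw [cdf, Finset.filter_true_of_mem fun x _ => Finset.le_max' _ x (Finset.mem_univ x), hμ]
  exact htop ▸ hτ

/-- `F⁻(q)` is `0` or the CDF at the predecessor of `q`. -/
lemma scdf_lt_of_forall_lt_cdf_lt (hτ : 0 < τ) {q : G} (hq : ∀ g < q, cdf μ g < τ) :
    scdf μ q < τ := by
  by_cases hbelow : (Finset.univ.filter fun g => g < q).Nonempty
  · set m := (Finset.univ.filter fun g => g < q).max' hbelow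
    have hmq : m < q := (Finset.mem_filter.1 (Finset.max'_mem _ hbelow)).2
    have hscdf : scdf μ q = cdf μ m := by
      rw [scdf, cdf]
      congr 1
      ext x
      simp only [Finset.mem_filter, Finset.mem_univ, true_and]
      exact ⟨fun hx => Finset.le_max' _ _ (by simpa using hx), fun hx => hx.trans_lt hmq⟩
    exact hscdf ▸ hq m hmq
  · rwa [scdf, Finset.not_nonempty_iff_eq_empty.1 hbelow, Finset.sum_empty]

lemma scdf_lowQ_lt [Nonempty G] (hτ : 0 < τ) : scdf μ (lowQ τ (cdf μ)) < τ :=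
  scdf_lt_of_forall_lt_cdf_lt hτ fun _ => apply_lt_of_lt_lowQ

lemma lowQ_cdf_eq [Nonempty G] (hμ : ∀ g, 0 ≤ μ g) {q : G} (hcdf : τ ≤ cdf μ q)
    (hscdf : scdf μ q < τ) : lowQ τ (cdf μ) = q := by
  refine (lowQ_le hcdf).eq_of_not_lt fun hlt => ?_
  have := le_apply_lowQ ⟨q, hcdf⟩
  linarith [cdf_le_scdf_of_lt_s5 hμ hlt]

end CDF

section Recursion

variable {G P : Type*} [Fintype G] [LinearOrder G] [Nonempty G] [Fintype P]
  {μ : P → G → ℝ} {τ : ℕ → ℝ} {i : ℕ}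

lemma qPi_succ_snd_subset : (qPi μ τ (i + 1)).2 ⊆ (qPi μ τ i).2 :=
  Finset.filter_subset _ _

lemma scdf_qPi_succ_le {π π' : P} (hπ : π ∈ (qPi μ τ (i + 1)).2) (hπ' : π' ∈ (qPi μ τ i).2) :
    scdf (μ π) (qPi μ τ (i + 1)).1 ≤ scdf (μ π') (qPi μ τ (i + 1)).1 :=
  (Finset.mem_filter.1 hπ).2 π' hπ'

lemma qPi_snd_nonempty [Nonempty P] : ∀ i, (qPi μ τ i).2.Nonempty
  | 0 => Finset.univ_nonempty
  | i + 1 => by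
    obtain ⟨π, hπ, hmin⟩ := Finset.exists_min_image (qPi μ τ i).2
      (fun π => scdf (μ π) (qPi μ τ (i + 1)).1) (qPi_snd_nonempty i)
    exact ⟨π, Finset.mem_filter.2 ⟨hπ, hmin⟩⟩

lemma qPi_succ_fst_eq_max' (h : (qPi μ τ i).2.Nonempty) :
    (qPi μ τ (i + 1)).1 =
      ((qPi μ τ i).2.image fun π => lowQ (τ (i + 1)) (cdf (μ π))).max'
        (Finset.image_nonempty.2 h) := by
  rw [qPi, ← Finset.coe_max', WithBot.unbotD_coe]

lemma lowQ_le_qPi_succ_fst {π : P} (hπ : π ∈ (qPi μ τ i).2) :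
    lowQ (τ (i + 1)) (cdf (μ π)) ≤ (qPi μ τ (i + 1)).1 := by
  rw [qPi_succ_fst_eq_max' ⟨π, hπ⟩]
  exact Finset.le_max' _ _ (Finset.mem_image_of_mem (fun π => lowQ (τ (i + 1)) (cdf (μ π))) hπ)

lemma exists_lowQ_eq_qPi_succ_fst (h : (qPi μ τ i).2.Nonempty) :
    ∃ π ∈ (qPi μ τ i).2, lowQ (τ (i + 1)) (cdf (μ π)) = (qPi μ τ (i + 1)).1 := by
  rw [qPi_succ_fst_eq_max' h]
  exact Finset.mem_image.1 (Finset.max'_mem _ _)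

lemma lowQ_eq_qPi_succ_fst (hpos : ∀ π g, 0 ≤ μ π g) (hsum : ∀ π, ∑ g, μ π g = 1)
    (hτ₀ : 0 < τ (i + 1)) (hτ₁ : τ (i + 1) ≤ 1) {π : P} (hπ : π ∈ (qPi μ τ (i + 1)).2) :
    lowQ (τ (i + 1)) (cdf (μ π)) = (qPi μ τ (i + 1)).1 := by
  have hπi := qPi_succ_snd_subset hπ
  obtain ⟨π', hπ', hπ'q⟩ := exists_lowQ_eq_qPi_succ_fst ⟨π, hπi⟩
  refine lowQ_cdf_eq (hpos π) ?_ ?_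
  · exact (le_apply_lowQ (exists_le_cdf (hsum π) hτ₁)).trans
      (cdf_mono (hpos π) (lowQ_le_qPi_succ_fst hπi))
  · exact (scdf_qPi_succ_le hπ hπ').trans_lt (hπ'q ▸ scdf_lowQ_lt hτ₀)

lemma qPi_succ_fst_le_succ [Nonempty P] (hpos : ∀ π g, 0 ≤ μ π g)
    (hsum : ∀ π, ∑ g, μ π g = 1) (hτ₀ : 0 < τ (i + 1)) (hτ : τ (i + 1) ≤ τ (i + 2))
    (hτ₁ : τ (i + 2) ≤ 1) : (qPi μ τ (i + 1)).1 ≤ (qPi μ τ (i + 2)).1 := by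
  obtain ⟨π, hπ⟩ := qPi_snd_nonempty (μ := μ) (τ := τ) (i + 2)
  have hπ₁ := qPi_succ_snd_subset hπ
  calc (qPi μ τ (i + 1)).1 = lowQ (τ (i + 1)) (cdf (μ π)) :=
        (lowQ_eq_qPi_succ_fst hpos hsum hτ₀ (hτ.trans hτ₁) hπ₁).symm
    _ ≤ lowQ (τ (i + 2)) (cdf (μ π)) := lowQ_mono_left hτ (exists_le_cdf (hsum π) hτ₁)
    _ ≤ (qPi μ τ (i + 2)).1 := lowQ_le_qPi_succ_fst hπ₁

end Recursion

/-- every `π ∈ Π_i` attains the optimal quantile `q*_i`, and the optimal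
quantiles are monotone: `q*_1 ≤ q*_2 ≤ … ≤ q*_L`. -/
theorem qPi_mem_attains_and_quantiles_monotone
    {G P : Type*} [Fintype G] [LinearOrder G] [Nonempty G]
    [Fintype P] [Nonempty P]
    (μ : P → G → ℝ)
    (hpos : ∀ π g, 0 ≤ μ π g) (hsum : ∀ π, ∑ g, μ π g = 1)
    (L : ℕ) (τ : ℕ → ℝ)
    (hτpos : ∀ i, 1 ≤ i → i ≤ L → 0 < τ i)
    (hτmono : ∀ i j, 1 ≤ i → i < j → j ≤ L → τ i < τ j)
    (hτone : ∀ i, 1 ≤ i → i ≤ L → τ i ≤ 1) :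
    (∀ i, 1 ≤ i → i ≤ L → ∀ π ∈ (qPi μ τ i).2,
        lowQ (τ i) (cdf (μ π)) = (qPi μ τ i).1) ∧
    (∀ i j, 1 ≤ i → i ≤ j → j ≤ L → (qPi μ τ i).1 ≤ (qPi μ τ j).1) := by
  refine ⟨fun i hi hiL π hπ => ?_, fun i j hi hij hjL => ?_⟩
  · obtain ⟨k, rfl⟩ := Nat.exists_eq_add_of_le' hi
    exact lowQ_eq_qPi_succ_fst hpos hsum (hτpos _ hi hiL) (hτone _ hi hiL) hπ
  · have hmono : MonotoneOn (fun i => (qPi μ τ i).1) (Set.Icc 1 L) := by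
      refine monotoneOn_of_le_succ Set.ordConnected_Icc fun k _ hk hk' => ?_
      obtain ⟨n, rfl⟩ := Nat.exists_eq_add_of_le' hk.1
      simp only [Order.succ_eq_add_one, Set.mem_Icc] at hk hk' ⊢
      exact qPi_succ_fst_le_succ hpos hsum (hτpos _ hk.1 hk.2)
        (hτmono _ _ hk.1 (by omega) hk'.2).le (hτone _ hk'.1 hk'.2)
    exact hmono ⟨hi, hij.trans hjL⟩ ⟨hi.trans hij, hjL⟩ hij
end

section
/- Consider a finite-horizon multi-objective MDP with finite nonempty state type S, finite nonempty action type A, transition probabilities p : S → A → S → ℝ (p s a s' ≥ 0 and ∑_{s'} p s a s' = 1), rewards R : Fin L → S → A → ℝ, and horizon T ≥ 1. Let π* be any FLMDP policy (a deterministic Markov policy selecting at each time t < T and state s an action in the innermost restricted argmax set A_L(t,s) of the FLMDP backward recursion). Then π* is lexicographically optimal for every tail problem: for every deterministic Markov policy π, every t ≤ T, and every state s, the vector (V^π_1(t,s), …, V^π_L(t,s)) is lexicographically less than or equal to (V^{π*}_1(t,s), …, V^{π*}_L(t,s)); moreover V^{π*}_i(t,s) = V*_i(t,s) for all i, t, s,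 where V* are the values produced by the FLMDP recursion. -/
open Classical

/-- Value functions of a deterministic Markov policy `pol` in a finite-horizon
multi-objective MDP, by backward recursion: `V^π_i(T,s) = 0` and, for `t < T`,
`V^π_i(t,s) = R_i(s, π_t(s)) + ∑_{s'} p s (π_t(s)) s' · V^π_i(t+1,s')`. -/
noncomputable def Vpol {S A : Type*} [Fintype S] (p : S → A → S → ℝ) {L : ℕ}
    (R : Fin L → S → A → ℝ) (T : ℕ) (pol : ℕ → S → A) : ℕ → Fin L → S → ℝ
  | t => fun i s =>
    if h : t < T then
      R i s (pol t s) + ∑ s', p s (pol t s) s' * Vpol p R T pol (t + 1) i s'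
    else 0
  termination_by t => T - t
  decreasing_by omega

/-- The FLMDP optimal value functions `V*`, by backward recursion: `V*_i(T,s) = 0`
and, for `t < T`, `V*_i(t,s) = max_{a ∈ A_{i-1}(t,s)} Q_i(t,s,a)` where
`Q_i(t,s,a) = R_i(s,a) + ∑_{s'} p s a s' · V*_i(t+1,s')`, `A_0(t,s) = A`, and
`A_i(t,s)` is the set of maximizers of `Q_i(t,s,·)` over `A_{i-1}(t,s)`
(indices written 0-based via `Fin L`). -/
noncomputable def Vstar {S A : Type*} [Fintype S] [Fintype A] (p : S → A → S → ℝ) {L : ℕ}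
    (R : Fin L → S → A → ℝ) (T : ℕ) : ℕ → Fin L → S → ℝ
  | t => fun i s =>
    if h : t < T then
      sSup ((fun a => R i s a + ∑ s', p s a s' * Vstar p R T (t + 1) i s') ''
        ↑(Nat.rec (motive := fun _ => S → Finset A) (fun _ => (Finset.univ : Finset A))
            (fun j prev s => (prev s).filter fun a =>
              if hj : j < L then
                ∀ a' ∈ prev s,
                  (R ⟨j, hj⟩ s a' + ∑ s', p s a' s' * Vstar p R T (t + 1) ⟨j, hj⟩ s') ≤
                    (R ⟨j, hj⟩ s a + ∑ s', p s a s' * Vstar p R T (t + 1) ⟨j, hj⟩ s')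
              else True)
            (i : ℕ) s))
    else 0
  termination_by t => T - t
  decreasing_by all_goals omega

/-- The FLMDP state-action values `Q_i(t,s,a) = R_i(s,a) + ∑_{s'} p s a s' · V*_i(t+1,s')`
(0-based `i`). -/
noncomputable def Qstar {S A : Type*} [Fintype S] [Fintype A] (p : S → A → S → ℝ) {L : ℕ}
    (R : Fin L → S → A → ℝ) (T : ℕ) (t : ℕ) (i : Fin L) (s : S) (a : A) : ℝ :=
  R i s a + ∑ s', p s a s' * Vstar p R T (t + 1) i s'

/-- The FLMDP restricted action sets: `A_0(t,s) = A` and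
`A_{j+1}(t,s) = {a ∈ A_j(t,s) : Q_{j+1}(t,s,a) maximal over A_j(t,s)}`
(the `Q` index written 0-based). -/
noncomputable def Aset {S A : Type*} [Fintype S] [Fintype A] (p : S → A → S → ℝ) {L : ℕ}
    (R : Fin L → S → A → ℝ) (T : ℕ) (t : ℕ) : ℕ → S → Finset A
  | 0, _ => Finset.univ
  | j + 1, s =>
    if hj : j < L then
      (Aset p R T t j s).filter fun a =>
        ∀ a' ∈ Aset p R T t j s, Qstar p R T t ⟨j, hj⟩ s a' ≤ Qstar p R T t ⟨j, hj⟩ s a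
    else Aset p R T t j s

/-! Read the value functions as vectors in `Lex (Fin L → ℝ)`, an ordered vector space. The
FLMDP recursion makes `V*(t,s)` the lexicographic maximum of `Q(t,s,·)` over all actions,
attained on `A_L(t,s)`. Backward induction then runs as for a single objective:
`V^π(t,s) = R(s,a) + ∑ p(s'|s,a) V^π(t+1,s') ≤_lex Q(t,s,a) ≤_lex V*(t,s)` with `a = π_t(s)`,
with equalities throughout when `a ∈ A_L(t,s)`. -/

namespace Pi.Lex

instance posSMulMono {ι 𝕜 β : Type*} [LinearOrder ι] [Semiring 𝕜] [PartialOrder 𝕜]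
    [AddCommMonoid β] [PartialOrder β] [Module 𝕜 β] [PosSMulStrictMono 𝕜 β] :
    PosSMulMono 𝕜 (Lex (ι → β)) where
  smul_le_smul_of_nonneg_left c hc x y hxy := by
    obtain rfl | hc := hc.eq_or_lt
    · simp only [zero_smul, le_refl]
    obtain ⟨i, hagree, hlt⟩ | rfl := hxy.lt_or_eq
    · exact le_of_lt ⟨i, fun j hj => congrArg (c • ·) (hagree j hj),
        smul_lt_smul_of_pos_left hlt hc⟩
    · exact le_rfl

end Pi.Lex

theorem Pi.toLex_le_of_apply_le {ι β : Type*} [LinearOrder ι] [WellFoundedLT ι] [LinearOrder β]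
    {x y : ι → β} (h : ∀ i, (∀ j < i, x j = y j) → x i ≤ y i) : toLex x ≤ toLex y :=
  not_lt.mp fun ⟨i, hagree, hlt⟩ => (h i fun j hj => (hagree j hj).symm).not_gt hlt

theorem backward_induction {T : ℕ} {P : ℕ → Prop} (terminal : ∀ t, T ≤ t → P t)
    (step : ∀ t < T, P (t + 1) → P t) (t : ℕ) : P t := by
  induction h : T - t generalizing t with
  | zero => exact terminal t (by omega)
  | succ k ih => exact step t (by omega) (ih (t + 1) (by omega))

section FLMDP

variable {S A : Type*} [Fintype S] [Fintype A] (p : S → A → S → ℝ) {L : ℕ}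
  (R : Fin L → S → A → ℝ) (T : ℕ)

omit [Fintype A] in
theorem Vpol_of_lt (pol : ℕ → S → A) {t : ℕ} (ht : t < T) (i : Fin L) (s : S) :
    Vpol p R T pol t i s
      = R i s (pol t s) + ∑ s', p s (pol t s) s' * Vpol p R T pol (t + 1) i s' := by
  rw [Vpol]
  exact dif_pos ht

omit [Fintype A] in
theorem Vpol_of_le (pol : ℕ → S → A) {t : ℕ} (ht : T ≤ t) (i : Fin L) (s : S) :
    Vpol p R T pol t i s = 0 := by
  rw [Vpol]
  exact dif_neg (not_lt.mpr ht)

theorem Vstar_of_le {t : ℕ} (ht : T ≤ t) (i : Fin L) (s : S) : Vstar p R T t i s = 0 := by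
  rw [Vstar]
  exact dif_neg (not_lt.mpr ht)

theorem Vstar_of_lt {t : ℕ} (ht : t < T) (i : Fin L) (s : S) :
    Vstar p R T t i s = sSup (Qstar p R T t i s '' Aset p R T t i s) := by
  -- `Vstar` spells out `Aset` as an inline recursion
  have hrec : ∀ n, Nat.rec (motive := fun _ => S → Finset A) (fun _ => Finset.univ)
      (fun j prev s => (prev s).filter fun a =>
        if hj : j < L then
          ∀ a' ∈ prev s,
            (R ⟨j, hj⟩ s a' + ∑ s', p s a' s' * Vstar p R T (t + 1) ⟨j, hj⟩ s') ≤
              (R ⟨j, hj⟩ s a + ∑ s', p s a s' * Vstar p R T (t + 1) ⟨j, hj⟩ s')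
        else True) n = Aset p R T t n := by
    intro n
    induction n with
    | zero => rfl
    | succ j ih =>
      funext s
      show Finset.filter _ (Nat.rec _ _ j s) = _
      rw [ih, Aset]
      by_cases hj : j < L
      · simp only [dif_pos hj, Qstar]
        congr 1
      · simp only [dif_neg hj, Finset.filter_true]
  rw [Vstar]
  simp only [dif_pos ht, hrec]
  rfl

theorem mem_Aset_succ {t : ℕ} (i : Fin L) (s : S) (a : A) :
    a ∈ Aset p R T t (i + 1) s ↔ a ∈ Aset p R T t i s ∧
      ∀ a' ∈ Aset p R T t i s, Qstar p R T t i s a' ≤ Qstar p R T t i s a := by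
  rw [Aset, dif_pos i.isLt, Finset.mem_filter]

theorem Aset_succ_of_le {t j : ℕ} (hj : L ≤ j) (s : S) :
    Aset p R T t (j + 1) s = Aset p R T t j s := by
  rw [Aset, dif_neg (not_lt.mpr hj)]

theorem Aset_antitone (t : ℕ) (s : S) : Antitone fun n => Aset p R T t n s := by
  refine antitone_nat_of_succ_le fun j => ?_
  by_cases hj : j < L
  · exact fun a ha => ((mem_Aset_succ p R T ⟨j, hj⟩ s a).mp ha).1
  · exact (Aset_succ_of_le p R T (not_lt.mp hj) s).le

theorem Qstar_le_Vstar {t : ℕ} (ht : t < T) (i : Fin L) {s : S} {a : A}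
    (ha : a ∈ Aset p R T t i s) : Qstar p R T t i s a ≤ Vstar p R T t i s := by
  rw [Vstar_of_lt p R T ht]
  exact le_csSup ((Aset p R T t i s).finite_toSet.image _).bddAbove ⟨a, ha, rfl⟩

theorem Vstar_eq_Qstar {t : ℕ} (ht : t < T) (i : Fin L) {s : S} {a : A}
    (ha : a ∈ Aset p R T t (i + 1) s) : Vstar p R T t i s = Qstar p R T t i s a := by
  obtain ⟨ha, hmax⟩ := (mem_Aset_succ p R T i s a).mp ha
  refine le_antisymm ?_ (Qstar_le_Vstar p R T ht i ha)
  rw [Vstar_of_lt p R T ht]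
  exact csSup_le ⟨_, a, ha, rfl⟩ fun _ ⟨a', ha', hq⟩ => hq ▸ hmax a' ha'

theorem mem_Aset_of_Qstar_eq {t : ℕ} (ht : t < T) {s : S} {a : A} :
    ∀ n, (∀ j : Fin L, (j : ℕ) < n → Qstar p R T t j s a = Vstar p R T t j s) →
      a ∈ Aset p R T t n s
  | 0, _ => Finset.mem_univ a
  | n + 1, heq => by
    have ha := mem_Aset_of_Qstar_eq ht n fun j hj => heq j (by omega)
    by_cases hn : n < L
    · refine (mem_Aset_succ p R T ⟨n, hn⟩ s a).mpr ⟨ha, fun a' ha' => ?_⟩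
      rw [heq ⟨n, hn⟩ n.lt_add_one]
      exact Qstar_le_Vstar p R T ht _ ha'
    · rwa [Aset_succ_of_le p R T (not_lt.mp hn)]

theorem toLex_Qstar_le_Vstar {t : ℕ} (ht : t < T) (s : S) (a : A) :
    toLex (fun i => Qstar p R T t i s a) ≤ toLex (fun i => Vstar p R T t i s) :=
  Pi.toLex_le_of_apply_le fun i heq =>
    Qstar_le_Vstar p R T ht i (mem_Aset_of_Qstar_eq p R T ht i heq)

theorem Vpol_eq_Vstar (πstar : ℕ → S → A)
    (hstar : ∀ t < T, ∀ s, πstar t s ∈ Aset p R T t L s) (i : Fin L) (t : ℕ) (s : S) :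
    Vpol p R T πstar t i s = Vstar p R T t i s := by
  induction t using backward_induction (T := T) generalizing s with
  | terminal t ht => rw [Vpol_of_le p R T πstar ht, Vstar_of_le p R T ht]
  | step t ht ih =>
    have hmem : πstar t s ∈ Aset p R T t (i + 1) s :=
      Aset_antitone p R T t s (Nat.succ_le_of_lt i.isLt) (hstar t ht s)
    rw [Vpol_of_lt p R T πstar ht, Vstar_eq_Qstar p R T ht i hmem, Qstar]
    simp only [ih]

theorem toLex_Vpol_le_Vstar (hp0 : ∀ s a s', 0 ≤ p s a s') (pol : ℕ → S → A) (t : ℕ) (s : S) :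
    toLex (fun i => Vpol p R T pol t i s) ≤ toLex (fun i => Vstar p R T t i s) := by
  induction t using backward_induction (T := T) generalizing s with
  | terminal t ht => simp only [Vpol_of_le p R T pol ht, Vstar_of_le p R T ht, le_refl]
  | step t ht ih =>
    set a := pol t s
    have hexpand : ∀ V : S → Fin L → ℝ, toLex (fun i => R i s a + ∑ s', p s a s' * V s' i)
        = toLex (fun i => R i s a) + ∑ s', p s a s' • toLex (V s') := by
      intro V
      change toLex _ = toLex ((fun i => R i s a) + ∑ s', p s a s' • V s')
      congr 1
      funext i
      simp only [Pi.add_apply, Finset.sum_apply, Pi.smul_apply, smul_eq_mul]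
    calc toLex (fun i => Vpol p R T pol t i s)
        = toLex (fun i => R i s a)
            + ∑ s', p s a s' • toLex (fun i => Vpol p R T pol (t + 1) i s') := by
          simp only [Vpol_of_lt p R T pol ht]
          exact hexpand _
      _ ≤ toLex (fun i => R i s a)
            + ∑ s', p s a s' • toLex (fun i => Vstar p R T (t + 1) i s') := by
          gcongr with s'
          exacts [hp0 s a s', ih s']
      _ = toLex (fun i => Qstar p R T t i s a) := (hexpand _).symm
      _ ≤ toLex (fun i => Vstar p R T t i s) := toLex_Qstar_le_Vstar p R T ht s a

end FLMDP

theorem flmdp_policy_lexicographically_optimal_general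
    {S A : Type*} [Fintype S] [Fintype A]
    (p : S → A → S → ℝ)
    (hp0 : ∀ s a s', 0 ≤ p s a s')
    {L : ℕ} (R : Fin L → S → A → ℝ) (T : ℕ)
    (πstar : ℕ → S → A)
    (hstar : ∀ t < T, ∀ s, πstar t s ∈ Aset p R T t L s) :
    (∀ pol : ℕ → S → A, ∀ t ≤ T, ∀ s,
        toLex (fun i => Vpol p R T pol t i s) ≤ toLex (fun i => Vpol p R T πstar t i s)) ∧
    (∀ (i : Fin L) (t : ℕ) (s : S), Vpol p R T πstar t i s = Vstar p R T t i s) := by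
  have hvalue := Vpol_eq_Vstar p R T πstar hstar
  refine ⟨fun pol t _ s => ?_, hvalue⟩
  rw [funext (hvalue · t s)]
  exact toLex_Vpol_le_Vstar p R T hp0 pol t s

/-- any FLMDP policy `π*` (choosing actions in the innermost restricted
set `A_L(t,s)`) is lexicographically optimal for every tail problem, and its value
functions coincide with the values `V*` of the FLMDP recursion. -/
theorem flmdp_policy_lexicographically_optimal
    {S A : Type*} [Fintype S] [Fintype A] [Nonempty S] [Nonempty A]
    (p : S → A → S → ℝ)
    (hp0 : ∀ s a s', 0 ≤ p s a s') (hp1 : ∀ s a, ∑ s', p s a s' = 1)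
    {L : ℕ} (R : Fin L → S → A → ℝ) (T : ℕ) (hT : 1 ≤ T)
    (πstar : ℕ → S → A)
    (hstar : ∀ t < T, ∀ s, πstar t s ∈ Aset p R T t L s) :
    (∀ pol : ℕ → S → A, ∀ t ≤ T, ∀ s,
        toLex (fun i => Vpol p R T pol t i s) ≤ toLex (fun i => Vpol p R T πstar t i s)) ∧
    (∀ (i : Fin L) (t : ℕ) (s : S), Vpol p R T πstar t i s = Vstar p R T t i s) :=
  flmdp_policy_lexicographically_optimal_general p hp0 R T πstar hstar
end
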